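/- Suppose B is G-regular and V is a finite-dimensional ℚ_p-vector space with a ℚ_p-linear G-action. If dim_E D_B(V) = dim_{ℚ_p} V, then the natural B-linear map D_B(V) ⊗_E B → V ⊗_{ℚ_p} B sending d ⊗ b to b·d is bijective (i.e., V is B-admissible). -/

import Mathlib

open scoped TensorProduct

/-- The subring `E = B^G` of `G`-invariant elements of `B`. -/
def invariantSubring (G : Type*) [Group G] (B : Type*) [CommRing B]
    [MulSemiringAction G B] : Subring B where
  carrier := {b | ∀ g : G, g • b = b}
  zero_mem' g := smul_zero g
  one_mem' g := smul_one g
  add_mem' := fun ha hb g => by rw [smul_add, ha g, hb g]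
  mul_mem' := fun ha hb g => by rw [smul_mul', ha g, hb g]
  neg_mem' := fun ha g => by rw [smul_neg, ha g]

section

variable (p : ℕ) [Fact p.Prime]
variable (G : Type*) [Group G]
variable (B : Type*) [CommRing B] [Algebra ℚ_[p] B]
variable [MulSemiringAction G B] [SMulCommClass G ℚ_[p] B]
variable (V : Type*) [AddCommGroup V] [Module ℚ_[p] V]
variable [DistribMulAction G V] [SMulCommClass G ℚ_[p] V]

/-- The diagonal (semilinear) action of `g ∈ G` on `B ⊗[ℚ_p] V`,
`g • (b ⊗ v) = (g • b) ⊗ (g • v)`. -/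
noncomputable def diagAct (g : G) : B ⊗[ℚ_[p]] V →ₗ[ℚ_[p]] B ⊗[ℚ_[p]] V :=
  TensorProduct.map (DistribSMul.toLinearMap ℚ_[p] B g)
    (DistribSMul.toLinearMap ℚ_[p] V g)

lemma diagAct_smul (g : G) (b : B) (x : B ⊗[ℚ_[p]] V) :
    diagAct p G B V g (b • x) = (g • b) • diagAct p G B V g x := by
  induction x with
  | zero => simp
  | tmul b' v =>
      simp only [TensorProduct.smul_tmul', smul_eq_mul, diagAct, TensorProduct.map_tmul,
        DistribSMul.toLinearMap_apply, smul_mul']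
  | add x y hx hy => rw [smul_add, map_add, hx, hy, map_add, smul_add]

/-- `D_B(V) = (V ⊗[ℚ_p] B)^G` as a module over `E = B^G`. -/
noncomputable def invariantsD : Submodule (invariantSubring G B) (B ⊗[ℚ_[p]] V) where
  carrier := {x | ∀ g : G, diagAct p G B V g x = x}
  zero_mem' g := map_zero _
  add_mem' := fun hx hy g => by rw [map_add, hx g, hy g]
  smul_mem' := fun e x hx g => by
    have h : diagAct p G B V g ((e : B) • x) = (g • (e : B)) • diagAct p G B V g x :=
      diagAct_smul p G B V g (e : B) x
    have he : g • (e : B) = (e : B) := e.2 g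
    show diagAct p G B V g ((e : B) • x) = (e : B) • x
    rw [h, he, hx g]

/-- The natural map `D_B(V) ⊗[E] B → V ⊗[ℚ_p] B`, `d ⊗ b ↦ b • d`. -/
noncomputable def comparisonMap :
    (invariantsD p G B V) ⊗[invariantSubring G B] B →ₗ[invariantSubring G B]
      B ⊗[ℚ_[p]] V :=
  TensorProduct.lift
    { toFun := fun d =>
        { toFun := fun b => b • (d : B ⊗[ℚ_[p]] V)
          map_add' := fun b₁ b₂ => add_smul b₁ b₂ _
          map_smul' := fun e b => by
            show ((e : B) * b) • (d : B ⊗[ℚ_[p]] V) = (e : B) • (b • (d : B ⊗[ℚ_[p]] V))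
            rw [mul_smul] }
      map_add' := fun d₁ d₂ => by
        ext b
        simp
      map_smul' := fun e d => by
        ext b
        show b • ((e : B) • (d : B ⊗[ℚ_[p]] V)) = (e : B) • (b • (d : B ⊗[ℚ_[p]] V))
        rw [smul_comm] }

end

/-!
Since `B` is `G`-regular, `E = B^G` is a field, and an `E`-basis `(dᵢ)` of `D_B(V)` stays
linearly independent over `B` inside `B ⊗ V`: given a shortest relation `b_a d_a + ∑ bᵢ dᵢ = 0`,
the relations `b_a g(bᵢ) - g(b_a) bᵢ` are shorter, so each ratio `bᵢ / b_a` is a `G`-invariant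
element of `Frac B`, hence lies in `E`, contradicting `E`-independence.
When `dim_E D_B(V) = dim V`, the determinant `δ` of the `dᵢ` in a basis `1 ⊗ vⱼ` is then nonzero,
and the invariance of the `dᵢ` gives `g(δ) = det(g|V)⁻¹ δ`. So `ℚ_p δ` is a `G`-stable line, `δ` is
a unit, and the `dᵢ` form a `B`-basis of `B ⊗ V`: the comparison map sends the basis `dᵢ ⊗ 1` of
`D_B(V) ⊗_E B` to a basis.
-/
open Module

theorem Module.Basis.det_ne_zero_of_linearIndependent {R M ι : Type*} [CommRing R] [IsDomain R]
    [AddCommGroup M] [Module R M] [Fintype ι] [DecidableEq ι] (e : Basis ι R M) {v : ι → M}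
    (hv : LinearIndependent R v) : e.det v ≠ 0 := by
  have : Module.Free R M := .of_basis e
  have : Module.Finite R M := .of_basis e
  rw [e.det_apply, e.toMatrix_eq_toMatrix_constr, LinearMap.det_toMatrix, Ne,
    LinearMap.det_eq_zero_iff_ker_ne_bot, not_not, LinearMap.ker_eq_bot]
  have : ⇑(e.constr ℕ v) = Finsupp.linearCombination R v ∘ e.repr := by
    ext x
    simp [Finsupp.linearCombination_apply, Finsupp.sum_fintype]
  rw [this]
  exact Function.Injective.comp hv e.repr.injective

section BaseChange

variable {R A M ι G : Type*} [CommRing R] [CommRing A] [Algebra R A] [AddCommGroup M]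
  [Module R M] [Monoid G] [MulSemiringAction G A] [SMulCommClass G R A]

theorem Algebra.TensorProduct.basis_repr_rTensor_smul (b : Basis ι R M) (g : G)
    (x : A ⊗[R] M) (i : ι) :
    (basis A b).repr ((DistribSMul.toLinearMap R A g).rTensor M x) i =
      g • (basis A b).repr x i := by
  induction x with
  | zero => simp
  | tmul a m => simp [basis_repr_tmul, smul_mul', smul_algebraMap]
  | add x y hx hy => simp [hx, hy, smul_add]

theorem Algebra.TensorProduct.basis_det_rTensor_smul [Fintype ι] [DecidableEq ι]
    (b : Basis ι R M) (g : G) (v : ι → A ⊗[R] M) :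
    (basis A b).det ((DistribSMul.toLinearMap R A g).rTensor M ∘ v) =
      g • (basis A b).det v := by
  rw [Basis.det_apply, Basis.det_apply, ← MulSemiringAction.toRingHom_apply,
    RingHom.map_det]
  congr 1
  ext i j
  simp [Basis.toMatrix_apply, basis_repr_rTensor_smul]

end BaseChange

theorem bijective_of_tmul_basis_eq_smul_basis {E B D W ι : Type*} [CommSemiring E] [Semiring B]
    [Module E B] [AddCommMonoid D] [Module E D] [AddCommMonoid W] [Module E W] [Module B W]
    [IsScalarTower E B W] (bD : Basis ι E D) (bW : Basis ι B W) (φ : D ⊗[E] B →ₗ[E] W)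
    (hφ : ∀ i b, φ (bD i ⊗ₜ b) = b • bW i) : Function.Bijective φ := by
  classical
  let ψ : D ⊗[E] B ≃ₗ[E] ι →₀ B :=
    TensorProduct.congr bD.repr (LinearEquiv.refl E B) ≪≫ₗ TensorProduct.finsuppScalarLeft E B ι
  have hψ : ∀ c, φ (ψ.symm c) = bW.repr.symm c := by
    intro c
    induction c using Finsupp.induction_linear with
    | zero => simp
    | add c c' hc hc' => simp [hc, hc']
    | single i b => simp [ψ, hφ]
  have : ⇑φ = bW.repr.symm ∘ ψ := by
    ext x
    simp [← hψ]
  rw [this]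
  exact bW.repr.symm.bijective.comp ψ.bijective

section Regular

variable {G : Type*} [Group G] {B : Type*} [CommRing B] [IsDomain B]
  [MulSemiringAction G B] [MulSemiringAction G (FractionRing B)]

theorem exists_mem_invariantSubring_eq_mul
    (hext : ∀ (g : G) (b : B),
      g • algebraMap B (FractionRing B) b = algebraMap B (FractionRing B) (g • b))
    (hreg₁ : ∀ x : FractionRing B, (∀ g : G, g • x = x) →
      x ∈ (algebraMap B (FractionRing B)).range)
    {a b : B} (ha : a ≠ 0) (hab : ∀ g : G, a * g • b = g • a * b) :
    ∃ e ∈ invariantSubring G B, b = e * a := by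
  set φ := algebraMap B (FractionRing B)
  have hφ : Function.Injective φ := IsFractionRing.injective B (FractionRing B)
  have hφa : ∀ g : G, φ (g • a) ≠ 0 := fun g =>
    (map_ne_zero_iff φ hφ).2 ((smul_ne_zero_iff_ne g).2 ha)
  have hfix : ∀ g : G, g • (φ b / φ a) = φ b / φ a := by
    intro g
    rw [smul_div₀', hext, hext, div_eq_div_iff (hφa g) (by simpa using hφa 1), ← map_mul,
      ← map_mul]
    congr 1
    linear_combination hab g
  obtain ⟨e, he⟩ := hreg₁ _ hfix
  refine ⟨e, fun g => hφ ?_, hφ ?_⟩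
  · rw [← hext, he, hfix]
  · rw [map_mul, he, div_mul_cancel₀ _ (by simpa using hφa 1)]

theorem isField_invariantSubring
    (hext : ∀ (g : G) (b : B),
      g • algebraMap B (FractionRing B) b = algebraMap B (FractionRing B) (g • b))
    (hreg₁ : ∀ x : FractionRing B, (∀ g : G, g • x = x) →
      x ∈ (algebraMap B (FractionRing B)).range) :
    IsField (invariantSubring G B) where
  exists_pair_ne := ⟨0, 1, zero_ne_one⟩
  mul_comm := mul_comm
  mul_inv_cancel {a} ha := by
    obtain ⟨e, he, hea⟩ := exists_mem_invariantSubring_eq_mul hext hreg₁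
      (b := 1) (Subtype.coe_ne_coe.2 ha) (fun g => by rw [a.2 g, smul_one])
    exact ⟨⟨e, he⟩, Subtype.ext (by rw [Subring.coe_mul, mul_comm, ← hea]; rfl)⟩

end Regular

section Invariants

variable {p : ℕ} [Fact p.Prime] {G : Type*} [Group G]
variable {B : Type*} [CommRing B] [Algebra ℚ_[p] B] [MulSemiringAction G B]
  [SMulCommClass G ℚ_[p] B]
variable {V : Type*} [AddCommGroup V] [Module ℚ_[p] V] [DistribMulAction G V]
  [SMulCommClass G ℚ_[p] V]

@[simp]
theorem diagAct_coe_invariantsD (g : G) (x : invariantsD p G B V) :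
    diagAct p G B V g x = x :=
  x.2 g

theorem diagAct_sum_smul {ι : Type*} (g : G) (s : Finset ι) (c : ι → B)
    (d : ι → invariantsD p G B V) :
    diagAct p G B V g (∑ i ∈ s, c i • (d i : B ⊗[ℚ_[p]] V)) =
      ∑ i ∈ s, (g • c i) • (d i : B ⊗[ℚ_[p]] V) := by
  simp only [map_sum, diagAct_smul, diagAct_coe_invariantsD]

theorem diagAct_eq_rTensor_baseChange (g : G) (x : B ⊗[ℚ_[p]] V) :
    diagAct p G B V g x = (DistribSMul.toLinearMap ℚ_[p] B g).rTensor V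
      ((DistribSMul.toLinearMap ℚ_[p] V g).baseChange B x) := by
  rw [LinearMap.baseChange_eq_ltensor, ← LinearMap.comp_apply, LinearMap.rTensor_comp_lTensor]
  rfl

variable [IsDomain B] [MulSemiringAction G (FractionRing B)]

theorem mem_span_of_smul_add_sum_eq_zero
    (hext : ∀ (g : G) (b : B),
      g • algebraMap B (FractionRing B) b = algebraMap B (FractionRing B) (g • b))
    (hreg₁ : ∀ x : FractionRing B, (∀ g : G, g • x = x) →
      x ∈ (algebraMap B (FractionRing B)).range)
    {ι : Type*} (d : ι → invariantsD p G B V) (s : Finset ι)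
    (hs : ∀ c : ι → B, ∑ i ∈ s, c i • (d i : B ⊗[ℚ_[p]] V) = 0 → ∀ i ∈ s, c i = 0)
    {a : ι} {c : ι → B} (ha : c a ≠ 0)
    (hrel : c a • (d a : B ⊗[ℚ_[p]] V) + ∑ i ∈ s, c i • (d i : B ⊗[ℚ_[p]] V) = 0) :
    d a ∈ Submodule.span (invariantSubring G B) (d '' s) := by
  have hratio : ∀ i ∈ s, ∀ g : G, c a * g • c i = g • c a * c i := by
    intro i hi g
    refine sub_eq_zero.1 (hs (fun j => c a * g • c j - g • c a * c j) ?_ i hi)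
    have hrelg := congrArg (diagAct p G B V g) hrel
    rw [map_add, diagAct_smul, diagAct_coe_invariantsD, diagAct_sum_smul, map_zero] at hrelg
    have hsplit : ∑ j ∈ s, (c a * g • c j - g • c a * c j) • (d j : B ⊗[ℚ_[p]] V) =
        c a • ∑ j ∈ s, (g • c j) • (d j : B ⊗[ℚ_[p]] V) -
          (g • c a) • ∑ j ∈ s, c j • (d j : B ⊗[ℚ_[p]] V) := by
      rw [Finset.smul_sum, Finset.smul_sum, ← Finset.sum_sub_distrib]
      exact Finset.sum_congr rfl fun j _ => by module
    rw [hsplit]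
    linear_combination (norm := module) c a • hrelg - (g • c a) • hrel
  have : ∀ i, ∃ e : invariantSubring G B, i ∈ s → c i = e * c a := by
    intro i
    by_cases hi : i ∈ s
    · obtain ⟨e, he, hce⟩ := exists_mem_invariantSubring_eq_mul hext hreg₁ ha (hratio i hi)
      exact ⟨⟨e, he⟩, fun _ => hce⟩
    · exact ⟨0, fun h => absurd h hi⟩
  choose e he using this
  have hda : d a = -∑ i ∈ s, e i • d i := by
    refine Subtype.ext (eq_neg_of_add_eq_zero_left ((smul_eq_zero.1 ?_).resolve_left ha))
    rw [← hrel, smul_add, Submodule.coe_sum, Finset.smul_sum]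
    congr 1
    refine Finset.sum_congr rfl fun i hi => ?_
    rw [he i hi, Submodule.coe_smul, mul_comm, mul_smul]
    rfl
  rw [hda]
  exact Submodule.neg_mem _ (Submodule.sum_mem _ fun i hi =>
    Submodule.smul_mem _ _ (Submodule.subset_span (Set.mem_image_of_mem d hi)))

theorem linearIndependent_coe_invariantsD
    (hext : ∀ (g : G) (b : B),
      g • algebraMap B (FractionRing B) b = algebraMap B (FractionRing B) (g • b))
    (hreg₁ : ∀ x : FractionRing B, (∀ g : G, g • x = x) →
      x ∈ (algebraMap B (FractionRing B)).range)
    {ι : Type*} {d : ι → invariantsD p G B V}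
    (hd : LinearIndependent (invariantSubring G B) d) :
    LinearIndependent B (fun i => (d i : B ⊗[ℚ_[p]] V)) := by
  classical
  rw [linearIndependent_iff']
  intro s
  induction s using Finset.induction_on with
  | empty => simp
  | insert a s has ih =>
    intro c hc
    rw [Finset.sum_insert has] at hc
    by_cases ha : c a = 0
    · rw [ha, zero_smul, zero_add] at hc
      intro i hi
      rcases Finset.mem_insert.1 hi with rfl | hi
      exacts [ha, ih c hc i hi]
    · exact absurd (mem_span_of_smul_add_sum_eq_zero hext hreg₁ d s ih ha hc)
        (hd.notMem_span_image (by simpa using has))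

end Invariants

section Determinant

variable {p : ℕ} [Fact p.Prime] {G : Type*} [Group G]
variable {B : Type*} [CommRing B] [Algebra ℚ_[p] B] [MulSemiringAction G B]
  [SMulCommClass G ℚ_[p] B]
variable {V : Type*} [AddCommGroup V] [Module ℚ_[p] V] [DistribMulAction G V]
  [SMulCommClass G ℚ_[p] V]
variable {ι : Type*} [Fintype ι] [DecidableEq ι]

theorem smul_det_coe_invariantsD (eV : Basis ι ℚ_[p] V) (d : ι → invariantsD p G B V) (g : G) :
    g • (Algebra.TensorProduct.basis B eV).det (fun i => (d i : B ⊗[ℚ_[p]] V)) =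
      (LinearMap.det (DistribSMul.toLinearMap ℚ_[p] V g))⁻¹ •
        (Algebra.TensorProduct.basis B eV).det (fun i => (d i : B ⊗[ℚ_[p]] V)) := by
  set e := Algebra.TensorProduct.basis B eV
  set x := fun i => (d i : B ⊗[ℚ_[p]] V)
  set L := DistribSMul.toLinearMap ℚ_[p] V g
  have : Module.Finite ℚ_[p] V := .of_basis eV
  have hL : LinearMap.det L ≠ 0 :=
    (LinearEquiv.isUnit_det' (DistribMulAction.toLinearEquiv ℚ_[p] V g)).ne_zero
  have hdet : e.det x = algebraMap ℚ_[p] B (LinearMap.det L) * g • e.det x :=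
    calc e.det x
      _ = e.det ((DistribSMul.toLinearMap ℚ_[p] B g).rTensor V ∘ (L.baseChange B ∘ x)) := by
          congr 1
          ext i
          simp [x, L, ← diagAct_eq_rTensor_baseChange]
      _ = g • e.det (L.baseChange B ∘ x) := Algebra.TensorProduct.basis_det_rTensor_smul eV g _
      _ = algebraMap ℚ_[p] B (LinearMap.det L) * g • e.det x := by
          rw [Basis.det_comp, LinearMap.det_baseChange, smul_mul', smul_algebraMap]
  conv_rhs => rw [hdet]
  rw [Algebra.smul_def, ← mul_assoc, ← map_mul, inv_mul_cancel₀ hL, map_one, one_mul]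

theorem isUnit_det_coe_invariantsD [IsDomain B]
    (hreg₂ : ∀ b : B, b ≠ 0 → (∀ g : G, ∃ c : ℚ_[p], g • b = c • b) → IsUnit b)
    (eV : Basis ι ℚ_[p] V) {d : ι → invariantsD p G B V}
    (hd : LinearIndependent B (fun i => (d i : B ⊗[ℚ_[p]] V))) :
    IsUnit ((Algebra.TensorProduct.basis B eV).det (fun i => (d i : B ⊗[ℚ_[p]] V))) :=
  hreg₂ _ ((Algebra.TensorProduct.basis B eV).det_ne_zero_of_linearIndependent hd)
    fun g => ⟨_, smul_det_coe_invariantsD eV d g⟩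

end Determinant

/-- If `B` is `G`-regular, `V` is a finite-dimensional `p`-adic representation of `G`, and
`dim_E D_B(V) = dim_{ℚ_p} V`, then the natural map `D_B(V) ⊗[E] B → V ⊗[ℚ_p] B`,
`d ⊗ b ↦ b • d`, is bijective; i.e. `V` is `B`-admissible. -/
theorem comparisonMap_bijective_of_finrank_eq
    (p : ℕ) [Fact p.Prime]
    (G : Type*) [Group G]
    (B : Type*) [CommRing B] [IsDomain B] [Algebra ℚ_[p] B]
    [MulSemiringAction G B] [SMulCommClass G ℚ_[p] B]
    [MulSemiringAction G (FractionRing B)]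
    (hext : ∀ (g : G) (b : B),
      g • algebraMap B (FractionRing B) b = algebraMap B (FractionRing B) (g • b))
    (hreg₁ : ∀ x : FractionRing B, (∀ g : G, g • x = x) →
      x ∈ (algebraMap B (FractionRing B)).range)
    (hreg₂ : ∀ b : B, b ≠ 0 →
      (∀ g : G, ∃ c : ℚ_[p], g • b = c • b) → IsUnit b)
    (V : Type*) [AddCommGroup V] [Module ℚ_[p] V] [FiniteDimensional ℚ_[p] V]
    [DistribMulAction G V] [SMulCommClass G ℚ_[p] V]
    (hdim : Module.finrank (invariantSubring G B) (invariantsD p G B V) =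
      Module.finrank ℚ_[p] V) :
    Function.Bijective (comparisonMap p G B V) := by
  classical
  let := (isField_invariantSubring hext hreg₁).toField
  let bD := Basis.ofVectorSpace (invariantSubring G B) (invariantsD p G B V)
  have hd := linearIndependent_coe_invariantsD hext hreg₁ bD.linearIndependent
  have := hd.finite
  obtain ⟨_⟩ :=
    nonempty_fintype (Basis.ofVectorSpaceIndex (invariantSubring G B) (invariantsD p G B V))
  have hcard : finrank ℚ_[p] V = Fintype.card _ := hdim.symm.trans (finrank_eq_card_basis bD)
  let eV := (Module.finBasisOfFinrankEq ℚ_[p] V hcard).reindex (Fintype.equivFin _).symm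
  obtain ⟨hli, hspan⟩ :=
    (Basis.is_basis_iff_det (Algebra.TensorProduct.basis B eV)).2
      (isUnit_det_coe_invariantsD hreg₂ eV hd)
  exact bijective_of_tmul_basis_eq_smul_basis bD (Basis.mk hli hspan.ge)
    (comparisonMap p G B V) fun i b => by simp [comparisonMap]
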